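/- Let F be a free group with normal subgroup R and G = F/R. For any n ≥ 1 the quotient map F → G induces a surjection (F ∩ (1 + rf + f^n)) / (γ_2(R)·γ_n(F)) → D_n(G)/γ_n(G) whose kernel is (R ∩ (1 + rf + f^n)) / (γ_2(R)·(R ∩ γ_n(F))); that is, there is a natural short exact sequence of these three groups. -/

import Mathlib

/-- The augmentation homomorphism of the integral group ring `ℤ[G]`. -/
noncomputable def aug (G : Type*) [Group G] : MonoidAlgebra ℤ G →ₐ[ℤ] ℤ :=
  MonoidAlgebra.lift ℤ ℤ G 1

/-- The augmentation ideal of `ℤ[G]`, viewed as a `ℤ`-submodule of `ℤ[G]`. -/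
noncomputable def augIdeal (G : Type*) [Group G] : Submodule ℤ (MonoidAlgebra ℤ G) :=
  (RingHom.ker (aug G).toRingHom).restrictScalars ℤ

/-- The relation ideal `r = (R - 1)·ℤ[G]` associated to a subgroup `R ≤ G`. -/
noncomputable def relIdeal (G : Type*) [Group G] (R : Subgroup G) :
    Submodule ℤ (MonoidAlgebra ℤ G) :=
  Submodule.span ℤ {x | ∃ ρ ∈ R, ∃ a : MonoidAlgebra ℤ G,
    x = (MonoidAlgebra.of ℤ G ρ - 1) * a}

/-! The map is induced by `F → G`. Its image lies in `D_n(G)` because `ℤ[F] → ℤ[G]` kills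
`r` and maps `f^n` onto `g^n`. It is onto because the kernel of `ℤ[F] → ℤ[G]` is `r` and every
element of `r` is congruent modulo `rf` to some `ρ - 1` with `ρ ∈ R`: a lift `w` of
`d ∈ D_n(G)` with `w - 1 ≡ ρ - 1` modulo `rf + f^n` gives `wρ⁻¹ ∈ 1 + rf + f^n`. For the
kernel, `γ_n(F)` lies in `1 + f^n`, the preimage of `γ_n(G)` in `F` is `Rγ_n(F)`, and
Dedekind's modular law gives `Rγ_n(F) ∩ V = (R ∩ V)γ_n(F)`. -/

open MonoidAlgebra

class IsRightIdeal {A : Type*} [Ring A] (W : Submodule ℤ A) : Prop where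
  mul_right_mem : ∀ {x}, x ∈ W → ∀ y : A, x * y ∈ W

namespace IsRightIdeal

variable {A : Type*} [Ring A] (U W : Submodule ℤ A) [IsRightIdeal W]

instance mul : IsRightIdeal (U * W) where
  mul_right_mem {x} hx y := by
    induction hx using Submodule.mul_induction_on' with
    | mem_mul_mem u hu w hw =>
      rw [mul_assoc]
      exact Submodule.mul_mem_mul hu (mul_right_mem hw y)
    | add a _ b _ ha hb => rw [add_mul]; exact add_mem ha hb

instance pow_succ (m : ℕ) : IsRightIdeal (W ^ (m + 1)) := by
  rw [_root_.pow_succ]; infer_instance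

instance sup [IsRightIdeal U] : IsRightIdeal (U ⊔ W) where
  mul_right_mem {x} hx y := by
    obtain ⟨u, hu, w, hw, rfl⟩ := Submodule.mem_sup.1 hx
    rw [add_mul]
    exact add_mem (Submodule.mem_sup_left (mul_right_mem hu y))
      (Submodule.mem_sup_right (mul_right_mem hw y))

end IsRightIdeal

section GroupRing

open Submodule

variable {G : Type*} [Group G]

lemma aug_of (g : G) : aug G (of ℤ G g) = 1 := by
  simp [aug]

lemma mem_augIdeal_iff {x : MonoidAlgebra ℤ G} : x ∈ augIdeal G ↔ aug G x = 0 := Iff.rfl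

lemma of_sub_one_mem_augIdeal (g : G) : of ℤ G g - 1 ∈ augIdeal G := by
  rw [mem_augIdeal_iff, map_sub, map_one, aug_of, sub_self]

instance : IsRightIdeal (augIdeal G) where
  mul_right_mem {x} hx y := by
    rw [mem_augIdeal_iff] at hx ⊢
    rw [map_mul, hx, zero_mul]

lemma augIdeal_eq_span : augIdeal G = span ℤ (Set.range fun g : G => of ℤ G g - 1) := by
  refine le_antisymm (fun x hx => ?_)
    (span_le.2 (Set.range_subset_iff.2 of_sub_one_mem_augIdeal))
  suffices ∀ y : MonoidAlgebra ℤ G,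
      y - aug G y • 1 ∈ span ℤ (Set.range fun g : G => of ℤ G g - 1) by
    simpa [(mem_augIdeal_iff.1 hx)] using this x
  intro y
  induction y using MonoidAlgebra.induction_linear with
  | zero => simp
  | add a b ha hb =>
    rw [map_add, add_smul]
    convert add_mem ha hb using 1
    abel
  | single g z =>
    have h : single g z = z • of ℤ G g := by
      simp [MonoidAlgebra.of_apply, MonoidAlgebra.smul_single]
    rw [h, map_zsmul, aug_of, smul_eq_mul, mul_one, ← smul_sub]
    exact smul_mem _ _ (subset_span ⟨g, rfl⟩)

lemma of_sub_one_mem_relIdeal (R : Subgroup G) {ρ : G} (hρ : ρ ∈ R) :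
    of ℤ G ρ - 1 ∈ relIdeal G R :=
  subset_span ⟨ρ, hρ, 1, (mul_one _).symm⟩

lemma of_sub_of_mem_relIdeal (R : Subgroup G) {w u : G} (h : w * u⁻¹ ∈ R) :
    of ℤ G w - of ℤ G u ∈ relIdeal G R := by
  refine subset_span ⟨_, h, of ℤ G u, ?_⟩
  rw [sub_mul, ← map_mul, inv_mul_cancel_right, one_mul]

instance (R : Subgroup G) : IsRightIdeal (relIdeal G R) where
  mul_right_mem {x} hx y := by
    induction hx using Submodule.span_induction with
    | mem z hz =>
      obtain ⟨ρ, hρ, a, rfl⟩ := hz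
      rw [mul_assoc]
      exact subset_span ⟨ρ, hρ, a * y, rfl⟩
    | zero => simp
    | add a b _ _ ha hb => rw [add_mul]; exact add_mem ha hb
    | smul z a _ ha => rw [smul_mul_assoc]; exact smul_mem _ _ ha

def oneAddSubgroup (W : Submodule ℤ (MonoidAlgebra ℤ G)) [IsRightIdeal W] : Subgroup G where
  carrier := {g | of ℤ G g - 1 ∈ W}
  one_mem' := by
    show of ℤ G 1 - 1 ∈ W
    rw [map_one, sub_self]
    exact zero_mem W
  mul_mem' {a b} ha hb := by
    have h : of ℤ G (a * b) - 1 = (of ℤ G a - 1) * of ℤ G b + (of ℤ G b - 1) := by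
      rw [map_mul]; noncomm_ring
    show _ ∈ W
    rw [h]
    exact add_mem (IsRightIdeal.mul_right_mem ha _) hb
  inv_mem' {a} ha := by
    have h : of ℤ G a⁻¹ - 1 = -((of ℤ G a - 1) * of ℤ G a⁻¹) := by
      rw [sub_mul, ← map_mul, mul_inv_cancel, map_one, one_mul, neg_sub]
    show _ ∈ W
    rw [h]
    exact neg_mem (IsRightIdeal.mul_right_mem ha _)

lemma mem_oneAddSubgroup {W : Submodule ℤ (MonoidAlgebra ℤ G)} [IsRightIdeal W] {g : G} :
    g ∈ oneAddSubgroup W ↔ of ℤ G g - 1 ∈ W := Iff.rfl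

open scoped commutatorElement in
lemma of_commutatorElement_sub_one (x y : G) :
    of ℤ G ⁅x, y⁆ - 1 =
      ((of ℤ G x - 1) * (of ℤ G y - 1) - (of ℤ G y - 1) * (of ℤ G x - 1)) * of ℤ G (y * x)⁻¹ := by
  have h : (of ℤ G x - 1) * (of ℤ G y - 1) - (of ℤ G y - 1) * (of ℤ G x - 1) =
      of ℤ G (x * y) - of ℤ G (y * x) := by
    simp only [map_mul]; noncomm_ring
  rw [h, sub_mul, ← map_mul, ← map_mul, mul_inv_cancel, map_one, commutatorElement_def,
    mul_inv_rev, ← mul_assoc]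

lemma lowerCentralSeries_le_oneAddSubgroup (m : ℕ) :
    Subgroup.lowerCentralSeries (⊤ : Subgroup G) m ≤ oneAddSubgroup (augIdeal G ^ (m + 1)) := by
  induction m with
  | zero =>
    intro g _
    rw [mem_oneAddSubgroup, zero_add, pow_one]
    exact of_sub_one_mem_augIdeal g
  | succ k ih =>
    rw [Subgroup.lowerCentralSeries_succ, Subgroup.commutator_le]
    intro x hx y _
    rw [mem_oneAddSubgroup, of_commutatorElement_sub_one]
    refine IsRightIdeal.mul_right_mem (sub_mem ?_ ?_) _
    · rw [pow_succ]; exact mul_mem_mul (ih hx) (of_sub_one_mem_augIdeal y)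
    · rw [pow_succ']; exact mul_mem_mul (of_sub_one_mem_augIdeal y) (ih hx)

end GroupRing

section RelationModule

open Submodule

variable {G : Type*} [Group G] (R : Subgroup G)

lemma exists_sub_of_sub_one_mem_relIdeal_mul_augIdeal {x : MonoidAlgebra ℤ G}
    (hx : x ∈ relIdeal G R) :
    ∃ ρ ∈ R, x - (of ℤ G ρ - 1) ∈ relIdeal G R * augIdeal G := by
  have hrf {ρ : G} (hρ : ρ ∈ R) (σ : G) :
      (of ℤ G ρ - 1) * (of ℤ G σ - 1) ∈ relIdeal G R * augIdeal G :=
    mul_mem_mul (of_sub_one_mem_relIdeal R hρ) (of_sub_one_mem_augIdeal σ)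
  let S : AddSubgroup (MonoidAlgebra ℤ G) :=
    { carrier := {x | ∃ ρ ∈ R, x - (of ℤ G ρ - 1) ∈ relIdeal G R * augIdeal G}
      zero_mem' := ⟨1, R.one_mem, by rw [map_one, sub_self, sub_zero]; exact zero_mem _⟩
      add_mem' := by
        rintro x y ⟨ρ, hρ, hx⟩ ⟨σ, hσ, hy⟩
        refine ⟨ρ * σ, R.mul_mem hρ hσ, ?_⟩
        have h : x + y - (of ℤ G (ρ * σ) - 1) =
            (x - (of ℤ G ρ - 1)) + (y - (of ℤ G σ - 1)) - (of ℤ G ρ - 1) * (of ℤ G σ - 1) := by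
          rw [map_mul]; noncomm_ring
        rw [h]
        exact sub_mem (add_mem hx hy) (hrf hρ σ)
      neg_mem' := by
        rintro x ⟨ρ, hρ, hx⟩
        refine ⟨ρ⁻¹, R.inv_mem hρ, ?_⟩
        have hinv : of ℤ G ρ * of ℤ G ρ⁻¹ = 1 := by rw [← map_mul, mul_inv_cancel, map_one]
        have h : -x - (of ℤ G ρ⁻¹ - 1) =
            -(x - (of ℤ G ρ - 1)) + (of ℤ G ρ - 1) * (of ℤ G ρ⁻¹ - 1) := by
          rw [sub_mul, mul_sub, hinv, mul_one, one_mul]; abel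
        rw [h]
        exact add_mem (neg_mem hx) (hrf hρ ρ⁻¹) }
  have hS : relIdeal G R ≤ AddSubgroup.toIntSubmodule S := by
    refine span_le.2 ?_
    rintro _ ⟨ρ, hρ, a, rfl⟩
    have h : (of ℤ G ρ - 1) * a =
        aug G a • (of ℤ G ρ - 1) + (of ℤ G ρ - 1) * (a - aug G a • 1) := by
      rw [mul_sub, mul_smul_comm, mul_one]; abel
    have hρS : of ℤ G ρ - 1 ∈ S := ⟨ρ, hρ, by rw [sub_self]; exact zero_mem _⟩
    have hrfS {y} (hy : y ∈ relIdeal G R * augIdeal G) : y ∈ S :=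
      ⟨1, R.one_mem, by rwa [map_one, sub_self, sub_zero]⟩
    rw [SetLike.mem_coe, h]
    refine S.add_mem (S.zsmul_mem hρS _) (hrfS (mul_mem_mul (of_sub_one_mem_relIdeal R hρ) ?_))
    rw [mem_augIdeal_iff, map_sub, map_smul, map_one, smul_eq_mul, mul_one, sub_self]
  exact hS hx

end RelationModule

section GroupRingHom

open Submodule

variable {F G : Type*} [Group F] [Group G] {q : F →* G}

lemma mapDomainAlgHom_of (w : F) : mapDomainAlgHom ℤ ℤ q (of ℤ F w) = of ℤ G (q w) := by
  simp

lemma map_augIdeal (hq : Function.Surjective q) :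
    (augIdeal F).map (mapDomainAlgHom ℤ ℤ q).toLinearMap = augIdeal G := by
  rw [augIdeal_eq_span, augIdeal_eq_span, map_span, ← Set.range_comp,
    ← hq.range_comp fun g => of ℤ G g - 1]
  congr 2
  funext w
  simp only [Function.comp, AlgHom.toLinearMap_apply, map_sub, map_one, mapDomainAlgHom_of]

lemma map_relIdeal_eq_bot {R : Subgroup F} (hR : R ≤ q.ker) :
    (relIdeal F R).map (mapDomainAlgHom ℤ ℤ q).toLinearMap = ⊥ := by
  rw [relIdeal, map_span, span_eq_bot]
  rintro _ ⟨_, ⟨ρ, hρ, a, rfl⟩, rfl⟩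
  simp only [AlgHom.toLinearMap_apply, map_mul, map_sub, map_one, mapDomainAlgHom_of,
    MonoidHom.mem_ker.1 (hR hρ), sub_self, zero_mul]

lemma mem_relIdeal_ker_of_mapDomainAlgHom_eq_zero (hq : Function.Surjective q)
    {x : MonoidAlgebra ℤ F} (hx : mapDomainAlgHom ℤ ℤ q x = 0) : x ∈ relIdeal F q.ker := by
  choose s hs using hq
  -- `s` is a set-theoretic section of `q`, and `y ≡ s(q(y))` modulo `r` for every `y`
  let L : MonoidAlgebra ℤ F →ₗ[ℤ] MonoidAlgebra ℤ F :=
    LinearMap.id - mapDomainLinearMap ℤ ℤ (s ∘ q)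
  have hL : ∀ y, L y ∈ relIdeal F q.ker := by
    intro y
    induction y using MonoidAlgebra.induction_linear with
    | zero => simp
    | add a b ha hb => rw [map_add]; exact add_mem ha hb
    | single w z =>
      have h : L (single w z) = z • (single w 1 - single (s (q w)) 1) := by
        simp [L, smul_sub, MonoidAlgebra.smul_single]
      rw [h]
      refine smul_mem _ _ (of_sub_of_mem_relIdeal _ ?_)
      simp [hs]
  have hqx : mapDomainLinearMap ℤ ℤ q x = 0 := hx
  simpa [L, hqx] using hL x

lemma map_relIdeal_mul_augIdeal_sup_augIdeal_pow (hq : Function.Surjective q)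
    {R : Subgroup F} (hR : R ≤ q.ker) (k : ℕ) :
    (relIdeal F R * augIdeal F ⊔ augIdeal F ^ k).map (mapDomainAlgHom ℤ ℤ q).toLinearMap =
      augIdeal G ^ k := by
  rw [Submodule.map_sup, Submodule.map_mul, Submodule.map_pow, map_augIdeal hq,
    map_relIdeal_eq_bot hR, Submodule.bot_mul, bot_sup_eq]

end GroupRingHom

namespace Subgroup

variable {G H : Type*} [Group G] [Group H]

lemma inf_sup_assoc_of_le_of_normal {A C : Subgroup G} (B : Subgroup G) [C.Normal] (h : C ≤ A) :
    A ⊓ B ⊔ C = A ⊓ (B ⊔ C) := by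
  apply SetLike.coe_injective
  rw [mul_normal, inf_mul_assoc A B C h, coe_inf, mul_normal]

lemma map_inf_map_of_ker_le {f : G →* H} {K : Subgroup G} (L : Subgroup G) (h : f.ker ≤ K) :
    K.map f ⊓ L.map f = (K ⊓ L).map f := by
  refine le_antisymm ?_ (map_inf_le K L f)
  rintro _ ⟨hK, l, hl, rfl⟩
  have hlK : l ∈ K := by
    rw [← comap_map_eq_self h]
    exact hK
  exact ⟨l, ⟨hlK, hl⟩, rfl⟩

end Subgroup

section Presentation

variable {F : Type*} [Group F] (R : Subgroup F) [R.Normal]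

lemma comap_mk'_lowerCentralSeries (m : ℕ) :
    (Subgroup.lowerCentralSeries (⊤ : Subgroup (F ⧸ R)) m).comap (QuotientGroup.mk' R) =
      R ⊔ Subgroup.lowerCentralSeries ⊤ m := by
  rw [← Subgroup.map_top_of_surjective (QuotientGroup.mk' R) (QuotientGroup.mk'_surjective R),
    ← Subgroup.map_lowerCentralSeries, Subgroup.comap_map_eq, QuotientGroup.ker_mk', sup_comm]

lemma map_mk'_oneAddSubgroup (m : ℕ) :
    (oneAddSubgroup (relIdeal F R * augIdeal F ⊔ augIdeal F ^ (m + 1))).map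
        (QuotientGroup.mk' R) = oneAddSubgroup (augIdeal (F ⧸ R) ^ (m + 1)) := by
  set π := (mapDomainAlgHom ℤ ℤ (QuotientGroup.mk' R)).toLinearMap
  have hq := QuotientGroup.mk'_surjective R
  refine le_antisymm ?_ fun d hd => ?_
  · rintro _ ⟨w, hw, rfl⟩
    have h := Submodule.mem_map_of_mem (f := π) (mem_oneAddSubgroup.1 hw)
    rw [map_relIdeal_mul_augIdeal_sup_augIdeal_pow hq (QuotientGroup.ker_mk' R).ge] at h
    rw [mem_oneAddSubgroup]
    simpa only [π, AlgHom.toLinearMap_apply, map_sub, map_one, mapDomainAlgHom_of] using h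
  · obtain ⟨w, rfl⟩ := hq d
    obtain ⟨u, hu, hπu⟩ :
        of ℤ (F ⧸ R) (QuotientGroup.mk' R w) - 1 ∈ (augIdeal F ^ (m + 1)).map π := by
      rwa [Submodule.map_pow, map_augIdeal hq]
    have hx : of ℤ F w - 1 - u ∈ relIdeal F R := by
      refine QuotientGroup.ker_mk' R ▸ mem_relIdeal_ker_of_mapDomainAlgHom_eq_zero hq ?_
      change π (of ℤ F w - 1 - u) = 0
      rw [map_sub, hπu, sub_eq_zero]
      simp only [π, AlgHom.toLinearMap_apply, map_sub, map_one, mapDomainAlgHom_of]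
    obtain ⟨ρ, hρ, hρx⟩ := exists_sub_of_sub_one_mem_relIdeal_mul_augIdeal R hx
    refine ⟨w * ρ⁻¹, ?_, by simp [hρ]⟩
    have h :
        of ℤ F (w * ρ⁻¹) - 1 = (of ℤ F w - 1 - u - (of ℤ F ρ - 1) + u) * of ℤ F ρ⁻¹ := by
      rw [show of ℤ F w - 1 - u - (of ℤ F ρ - 1) + u = of ℤ F w - of ℤ F ρ by abel, sub_mul,
        ← map_mul, ← map_mul, mul_inv_cancel, map_one]
    rw [SetLike.mem_coe, mem_oneAddSubgroup, h]
    exact IsRightIdeal.mul_right_mem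
      (add_mem (Submodule.mem_sup_left hρx) (Submodule.mem_sup_right hu)) _

end Presentation

/-- For `G = F/R` and `n ≥ 1`, the quotient map `F → G` induces a surjection
`(F ∩ (1 + rf + f^n))/(γ_2(R)γ_n(F)) ↠ D_n(G)/γ_n(G)` with kernel
`(R ∩ (1 + rf + f^n))/(γ_2(R)(R ∩ γ_n(F)))`.  The source is realized as the image of
`V = F ∩ (1 + rf + f^n)` in `F/(γ_2(R)γ_n(F))`, the target as the image of `D_n(G)` in
`G/γ_n(G)`, and the kernel as the image of `R ⊓ V` in `F/(γ_2(R)γ_n(F))`. -/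
theorem dimensionQuotient_ses (α : Type*) (R : Subgroup (FreeGroup α)) [R.Normal]
    (n : ℕ) (hn : 1 ≤ n) :
    ∃ D : Subgroup (FreeGroup α ⧸ R),
      (∀ x : FreeGroup α ⧸ R, x ∈ D ↔
          MonoidAlgebra.of ℤ (FreeGroup α ⧸ R) x - 1 ∈ augIdeal (FreeGroup α ⧸ R) ^ n) ∧
      ∃ V : Subgroup (FreeGroup α),
        (∀ w : FreeGroup α, w ∈ V ↔
            MonoidAlgebra.of ℤ (FreeGroup α) w - 1 ∈
              relIdeal (FreeGroup α) R * augIdeal (FreeGroup α)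
                ⊔ augIdeal (FreeGroup α) ^ n) ∧
        ∃ φ : Subgroup.map
                (QuotientGroup.mk' (⁅R, R⁆ ⊔ Subgroup.lowerCentralSeries (⊤ : Subgroup (FreeGroup α)) (n - 1))) V →*
              (FreeGroup α ⧸ R) ⧸ Subgroup.lowerCentralSeries (⊤ : Subgroup (FreeGroup α ⧸ R)) (n - 1),
          (∀ (w : FreeGroup α) (hw : w ∈ V),
              φ ⟨QuotientGroup.mk' (⁅R, R⁆ ⊔ Subgroup.lowerCentralSeries (⊤ : Subgroup (FreeGroup α)) (n - 1)) w,
                  Subgroup.mem_map_of_mem _ hw⟩ =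
                QuotientGroup.mk' (Subgroup.lowerCentralSeries (⊤ : Subgroup (FreeGroup α ⧸ R)) (n - 1))
                  (QuotientGroup.mk' R w)) ∧
          φ.range = Subgroup.map
              (QuotientGroup.mk' (Subgroup.lowerCentralSeries (⊤ : Subgroup (FreeGroup α ⧸ R)) (n - 1))) D ∧
          φ.ker = (Subgroup.map
              (QuotientGroup.mk' (⁅R, R⁆ ⊔ Subgroup.lowerCentralSeries (⊤ : Subgroup (FreeGroup α)) (n - 1)))
              (R ⊓ V)).subgroupOf
            (Subgroup.map
              (QuotientGroup.mk' (⁅R, R⁆ ⊔ Subgroup.lowerCentralSeries (⊤ : Subgroup (FreeGroup α)) (n - 1))) V) := by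
  obtain ⟨m, rfl⟩ : ∃ m, n = m + 1 := ⟨n - 1, by omega⟩
  rw [Nat.add_sub_cancel]
  let V := oneAddSubgroup
    (relIdeal (FreeGroup α) R * augIdeal (FreeGroup α) ⊔ augIdeal (FreeGroup α) ^ (m + 1))
  let N := ⁅R, R⁆ ⊔ Subgroup.lowerCentralSeries (⊤ : Subgroup (FreeGroup α)) m
  let ψ := (QuotientGroup.mk' (Subgroup.lowerCentralSeries (⊤ : Subgroup (FreeGroup α ⧸ R)) m)).comp
    (QuotientGroup.mk' R)
  have hψ : ψ.ker = R ⊔ Subgroup.lowerCentralSeries ⊤ m := by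
    rw [← MonoidHom.comap_ker, QuotientGroup.ker_mk', comap_mk'_lowerCentralSeries]
  have hNψ : N ≤ ψ.ker := hψ ▸ sup_le_sup_right (Subgroup.commutator_le_left R R) _
  have hγV : Subgroup.lowerCentralSeries ⊤ m ≤ V := fun c hc =>
    Submodule.mem_sup_right (lowerCentralSeries_le_oneAddSubgroup m hc)
  refine ⟨oneAddSubgroup (augIdeal (FreeGroup α ⧸ R) ^ (m + 1)), fun _ => Iff.rfl,
    V, fun _ => Iff.rfl, (QuotientGroup.lift N ψ hNψ).domRestrict _, fun _ _ => rfl, ?_, ?_⟩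
  · rw [MonoidHom.domRestrict_range, Subgroup.map_map, QuotientGroup.lift_comp_mk',
      ← Subgroup.map_map, map_mk'_oneAddSubgroup]
  · rw [MonoidHom.ker_domRestrict, QuotientGroup.ker_lift, Subgroup.subgroupOf_inj,
      Subgroup.map_inf_map_of_ker_le _ ((QuotientGroup.ker_mk' N).trans_le hNψ), hψ, inf_comm,
      ← Subgroup.inf_sup_assoc_of_le_of_normal _ hγV, Subgroup.map_sup,
      (Subgroup.map_eq_bot_iff _).2 ((QuotientGroup.ker_mk' N).ge.trans' le_sup_right), sup_bot_eq,
      inf_comm V, inf_eq_left.2 (Subgroup.map_mono inf_le_right)]
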